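/- Let U, V be finite-dimensional K-subspaces of L. Assume that U, V, and the product set U·V are all contained in a K-subspace X of L satisfying K ∩ X = {0}. Then dim_K X ≥ dim_K U + dim_K V. -/

import Mathlib

/-!
Call a pair `(A, B)` of subspaces of `X` admissible if `A * B ≤ X`. Given an admissible pair
with `dim A + dim B > dim X`, the spaces `A` and `B` meet in some `x ≠ 0`. Right multiplication
by `x` cannot map `A` into itself: an injective endomorphism of a finite-dimensional space is
onto, so `x = a * x` for some `a ∈ A`, i.e. `1 ∈ A ⊆ X`. The Dyson-type transforms
`(A + A x, B ∩ x⁻¹ B)` and `(A ∩ A x⁻¹, B + x B)` are again admissible, and their dimension sums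
add up to twice that of `(A, B)`. So either the first one has a larger sum, or the second has at
least the same sum and a strictly smaller first component. This cannot go on forever, hence
`dim A + dim B ≤ dim X` for every admissible pair.
-/

open Module Submodule

namespace Submodule

variable {K V : Type*} [DivisionRing K] [AddCommGroup V] [Module K V]

theorem map_eq_self_of_injective {f : V →ₗ[K] V} (hf : Function.Injective f) {M : Submodule K V}
    [FiniteDimensional K M] (hM : M.map f ≤ M) : M.map f = M :=
  eq_of_le_of_finrank_eq hM (equivMapOfInjective f hf M).finrank_eq.symm

theorem mem_of_apply_mem_of_map_le {f : V →ₗ[K] V} (hf : Function.Injective f)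
    {M : Submodule K V} [FiniteDimensional K M] (hM : M.map f ≤ M) {v : V} (hv : f v ∈ M) :
    v ∈ M := by
  rw [← map_eq_self_of_injective hf hM] at hv
  obtain ⟨w, hw, hwv⟩ := hv
  exact hf hwv ▸ hw

theorem finrank_inf_comap_add_finrank_sup_map {f : V →ₗ[K] V} (hf : Function.Injective f)
    (M : Submodule K V) [FiniteDimensional K M] :
    finrank K ↥(M ⊓ M.comap f) + finrank K ↥(M ⊔ M.map f) = 2 * finrank K M := by
  have hmap : (M ⊓ M.comap f).map f = M.map f ⊓ M := by
    rw [map_inf f hf, map_comap_eq, ← inf_assoc, inf_of_le_left LinearMap.map_le_range]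
  have hinf : finrank K ↥(M ⊓ M.comap f) = finrank K ↥(M ⊓ M.map f) := by
    rw [(equivMapOfInjective f hf _).finrank_eq, hmap, inf_comm]
  have hfM : finrank K ↥(M.map f) = finrank K M := (equivMapOfInjective f hf M).finrank_eq.symm
  have := finrank_sup_add_finrank_inf_eq M (M.map f)
  omega

end Submodule

section Kemperman

open LinearMap (mulLeft mulRight)

variable {K L : Type*} [Field K] [DivisionRing L] [Algebra K L] {X : Submodule K L}

theorem one_notMem_of_one_inf_eq_bot (hX : (1 : Submodule K L) ⊓ X = ⊥) : (1 : L) ∉ X := by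
  intro h1
  have : (1 : L) ∈ (1 : Submodule K L) ⊓ X := ⟨mem_one.mpr ⟨1, map_one _⟩, h1⟩
  exact one_ne_zero ((mem_bot K).mp (hX ▸ this))

theorem map_mulRight_le {A B : Submodule K L} (hAB : A * B ≤ X) {x : L} (hx : x ∈ B) :
    A.map (mulRight K x) ≤ X := by
  rintro _ ⟨a, ha, rfl⟩
  exact hAB (mul_mem_mul ha hx)

theorem map_mulLeft_le {A B : Submodule K L} (hAB : A * B ≤ X) {x : L} (hx : x ∈ A) :
    B.map (mulLeft K x) ≤ X := by
  rintro _ ⟨b, hb, rfl⟩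
  exact hAB (mul_mem_mul hx hb)

theorem sup_map_mulRight_mul_inf_comap_mulLeft_le {A B : Submodule K L} (hAB : A * B ≤ X)
    (x : L) : (A ⊔ A.map (mulRight K x)) * (B ⊓ B.comap (mulLeft K x)) ≤ X := by
  rw [Submodule.sup_mul]
  refine sup_le ((mul_le_mul_right inf_le_left _).trans hAB) (mul_le.mpr ?_)
  rintro _ ⟨a, ha, rfl⟩ b ⟨-, hb⟩
  simpa [mul_assoc] using hAB (mul_mem_mul ha hb)

theorem inf_comap_mulRight_mul_sup_map_mulLeft_le {A B : Submodule K L} (hAB : A * B ≤ X)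
    (x : L) : (A ⊓ A.comap (mulRight K x)) * (B ⊔ B.map (mulLeft K x)) ≤ X := by
  rw [Submodule.mul_sup]
  refine sup_le ((mul_le_mul_left inf_le_left _).trans hAB) (mul_le.mpr ?_)
  rintro a ⟨-, ha⟩ _ ⟨b, hb, rfl⟩
  simpa [mul_assoc] using hAB (mul_mem_mul ha hb)

theorem exists_mem_inf_ne_zero_of_finrank_lt [FiniteDimensional K X] {A B : Submodule K L}
    (hA : A ≤ X) (hB : B ≤ X) (h : finrank K X < finrank K A + finrank K B) :
    ∃ x ∈ A ⊓ B, x ≠ 0 := by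
  have := finiteDimensional_of_le hA
  have := finiteDimensional_of_le hB
  have hsup := finrank_mono (sup_le hA hB)
  have hsum := finrank_sup_add_finrank_inf_eq A B
  refine (Submodule.ne_bot_iff _).mp fun hbot => ?_
  rw [hbot, finrank_bot] at hsum
  omega

theorem exists_mul_le_of_finrank_lt [FiniteDimensional K X] (hX : (1 : L) ∉ X)
    {A B : Submodule K L} (hA : A ≤ X) (hB : B ≤ X) (hAB : A * B ≤ X)
    (h : finrank K X < finrank K A + finrank K B) :
    ∃ A' B' : Submodule K L, A' ≤ X ∧ B' ≤ X ∧ A' * B' ≤ X ∧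
      (finrank K A + finrank K B < finrank K A' + finrank K B' ∨
        finrank K A' + finrank K B' = finrank K A + finrank K B ∧ finrank K A' < finrank K A) := by
  have := finiteDimensional_of_le hA
  have := finiteDimensional_of_le hB
  obtain ⟨x, ⟨hxA, hxB⟩, hx⟩ := exists_mem_inf_ne_zero_of_finrank_lt hA hB h
  have hr : Function.Injective (mulRight K x) := mul_left_injective₀ hx
  have hl : Function.Injective (mulLeft K x) := mul_right_injective₀ hx
  have hA₁ : A ⊓ A.comap (mulRight K x) < A := by
    refine inf_le_left.lt_of_ne fun hstable => hX (hA ?_)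
    refine mem_of_apply_mem_of_map_le hr (map_le_iff_le_comap.mpr (inf_eq_left.mp hstable)) ?_
    simpa using hxA
  have hdimA := finrank_inf_comap_add_finrank_sup_map hr A
  have hdimB := finrank_inf_comap_add_finrank_sup_map hl B
  have hdimA₁ := finrank_lt_finrank_of_lt hA₁
  by_cases hgrow : finrank K A + finrank K B <
      finrank K ↥(A ⊔ A.map (mulRight K x)) + finrank K ↥(B ⊓ B.comap (mulLeft K x))
  · exact ⟨_, _, sup_le hA (map_mulRight_le hAB hxB), inf_le_left.trans hB,
      sup_map_mulRight_mul_inf_comap_mulLeft_le hAB x, .inl hgrow⟩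
  · refine ⟨_, _, inf_le_left.trans hA, sup_le hB (map_mulLeft_le hAB hxA),
      inf_comap_mulRight_mul_sup_map_mulLeft_le hAB x, ?_⟩
    omega

theorem finrank_add_finrank_le_of_mul_le [FiniteDimensional K X] (hX : (1 : L) ∉ X)
    {A B : Submodule K L} (hA : A ≤ X) (hB : B ≤ X) (hAB : A * B ≤ X) :
    finrank K A + finrank K B ≤ finrank K X := by
  by_contra! h
  obtain ⟨A', B', hA', hB', hAB', hprogress⟩ := exists_mul_le_of_finrank_lt hX hA hB hAB h
  have := finrank_add_finrank_le_of_mul_le hX hA' hB' hAB'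
  omega
termination_by (2 * finrank K X - (finrank K A + finrank K B), finrank K A)
decreasing_by
  have := finrank_mono hA'
  have := finrank_mono hB'
  rcases hprogress with hlt | ⟨heq, hlt⟩
  · exact Prod.Lex.left _ _ (by omega)
  · rw [heq]
    exact Prod.Lex.right _ hlt

end Kemperman

theorem kemperman_corollary_general {K L : Type*} [Field K] [DivisionRing L] [Algebra K L]
    (U V X : Submodule K L)
    (hU : U ≤ X) (hV : V ≤ X) (hUV : ∀ u ∈ U, ∀ v ∈ V, u * v ∈ X)
    (hX : (1 : Submodule K L) ⊓ X = ⊥) :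
    ((Module.finrank K U + Module.finrank K V : ℕ) : Cardinal) ≤ Module.rank K ↥X := by
  by_cases hfin : FiniteDimensional K X
  · rw [← finrank_eq_rank, Nat.cast_le]
    exact finrank_add_finrank_le_of_mul_le (one_notMem_of_one_inf_eq_bot hX) hU hV
      (mul_le.mpr hUV)
  · exact Cardinal.natCast_lt_aleph0.le.trans (not_lt.mp (mt rank_lt_aleph0_iff.mp hfin))

/-- If the finite-dimensional `K`-subspaces `U, V` of `L` and the set of products `U·V` are
all contained in a `K`-subspace `X` of `L` with `K ∩ X = 0`, then
`dim X ≥ dim U + dim V`. -/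
theorem kemperman_corollary {K L : Type*} [Field K] [DivisionRing L] [Algebra K L]
    (U V X : Submodule K L) [FiniteDimensional K U] [FiniteDimensional K V]
    (hU : U ≤ X) (hV : V ≤ X) (hUV : ∀ u ∈ U, ∀ v ∈ V, u * v ∈ X)
    (hX : (1 : Submodule K L) ⊓ X = ⊥) :
    ((Module.finrank K U + Module.finrank K V : ℕ) : Cardinal) ≤ Module.rank K ↥X :=
  kemperman_corollary_general U V X hU hV hUV hX
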